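/- Let γ > 0 and let u, g, λ be real numbers. Then the Kuhn–Tucker conditions (u - g ≤ 0, λ ≤ 0, λ(u - g) = 0) hold if and only if both λ = -γ[u - g - γ⁻¹λ]_+ and u - g = [u - g - γ⁻¹λ]_- hold, where [x]_+ = max(x,0) and [x]_- = min(x,0). -/

import Mathlib

/-!
Put `a = u - g` and `b = -γ⁻¹ λ`, so that `u - g - γ⁻¹ λ = a + b`. A pair `(a, b)` satisfies the
complementarity conditions `a ≤ 0 ≤ b`, `a = 0 ∨ b = 0` exactly when `a = min (a + b) 0`, and,
since `min x 0 + max x 0 = x`, exactly when `b = max (a + b) 0`. Each of the two equations is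
therefore equivalent to the Kuhn–Tucker conditions.
-/

section Complementarity
variable {α : Type*} [AddCommGroup α] [LinearOrder α] [IsOrderedAddMonoid α] {a b : α}

theorem eq_min_add_zero_iff : a = min (a + b) 0 ↔ a ≤ 0 ∧ 0 ≤ b ∧ (a = 0 ∨ b = 0) := by
  rw [eq_comm, min_eq_iff, add_eq_left]
  constructor
  · rintro (⟨rfl, ha⟩ | ⟨rfl, hb⟩)
    · exact ⟨by simpa using ha, le_rfl, .inr rfl⟩
    · exact ⟨le_rfl, by simpa using hb, .inl rfl⟩
  · rintro ⟨ha, hb, rfl | rfl⟩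
    · exact .inr ⟨rfl, by simpa using hb⟩
    · exact .inl ⟨rfl, by simpa using ha⟩

theorem eq_max_add_zero_iff : b = max (a + b) 0 ↔ a ≤ 0 ∧ 0 ≤ b ∧ (a = 0 ∨ b = 0) := by
  have hsum : min (a + b) 0 + max (a + b) 0 = a + b := by rw [min_add_max, add_zero]
  rw [← eq_min_add_zero_iff, eq_sub_of_add_eq' hsum, eq_sub_iff_add_eq, add_comm a b,
    add_right_inj, eq_comm]

end Complementarity

theorem kuhn_tucker_iff_pos_neg_part (γ u g lam : ℝ) (hγ : 0 < γ) :
    (u - g ≤ 0 ∧ lam ≤ 0 ∧ lam * (u - g) = 0) ↔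
      (lam = -γ * max (u - g - γ⁻¹ * lam) 0 ∧
       u - g = min (u - g - γ⁻¹ * lam) 0) := by
  have hshift : u - g - γ⁻¹ * lam = u - g + γ⁻¹ * -lam := by ring
  have hscale (m : ℝ) : lam = -γ * m ↔ γ⁻¹ * -lam = m := by
    constructor <;> rintro rfl <;> field_simp
  have hnonneg : 0 ≤ γ⁻¹ * -lam ↔ lam ≤ 0 :=
    (mul_nonneg_iff_of_pos_left (inv_pos.mpr hγ)).trans neg_nonneg
  have hzero : γ⁻¹ * -lam = 0 ↔ lam = 0 := by simp [hγ.ne']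
  rw [hshift, hscale, eq_max_add_zero_iff, eq_min_add_zero_iff, and_self, hnonneg, hzero,
    mul_eq_zero, or_comm]
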